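/- arXiv:1202.4341 — 3 statements merged into one kernel-verified Lean document; each statement's English description precedes it below -/
import Mathlib

section
/- If d is a continuous derivation on a complex Banach algebra B and a ∈ B satisfies d²(a) = 0, then d(a) is quasi-nilpotent (i.e., its spectral radius is 0). -/
/-!
Kleinecke–Shirokov. Writing `b = d a`, the Leibniz rule and `d b = 0` give
`dᵐ⁺¹ (a x) = a dᵐ⁺¹ x + (m + 1) b dᵐ x`, hence `dⁿ (aⁿ) = n! bⁿ`. Therefore
`n! ‖bⁿ‖ ≤ (‖d‖ ‖a‖)ⁿ`, so `‖bⁿ‖ ≤ εⁿ` eventually for every `ε > 0`, and Gelfand's bound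
`ρ(b) ≤ liminf ‖bⁿ‖^(1/n)` forces `ρ(b) = 0`.
-/

open Filter Function
open scoped Nat ENNReal

section Leibniz

variable {B F : Type*} [Ring B] [FunLike F B B] {d : F}

theorem map_one_eq_zero_of_leibniz (hd : ∀ x y, d (x * y) = d x * y + x * d y) : d 1 = 0 := by
  simpa using hd 1 1

theorem map_pow_eq_zero_of_leibniz (hd : ∀ x y, d (x * y) = d x * y + x * d y) {b : B}
    (hb : d b = 0) (n : ℕ) : d (b ^ n) = 0 := by
  induction n with
  | zero => simpa using map_one_eq_zero_of_leibniz hd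
  | succ n ih => rw [pow_succ, hd, ih, hb, zero_mul, mul_zero, add_zero]

theorem iterate_map_mul_of_leibniz [AddMonoidHomClass F B B]
    (hd : ∀ x y, d (x * y) = d x * y + x * d y) {a : B} (ha : d (d a) = 0) (m : ℕ) (x : B) :
    d^[m + 1] (a * x) = a * d^[m + 1] x + (m + 1) • (d a * d^[m] x) := by
  induction m generalizing x with
  | zero => simp [hd, add_comm]
  | succ m ih =>
    rw [iterate_succ_apply' d (m + 1), ih, map_add, map_nsmul, hd, hd, ha, zero_mul, zero_add,
      ← iterate_succ_apply' d (m + 1), ← iterate_succ_apply' d m]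
    simp only [Nat.succ_eq_add_one]
    rw [succ_nsmul _ (m + 1)]
    abel

theorem iterate_map_pow_of_leibniz [AddMonoidHomClass F B B]
    (hd : ∀ x y, d (x * y) = d x * y + x * d y) {a : B} (ha : d (d a) = 0) (n : ℕ) :
    d^[n] (a ^ n) = n ! • d a ^ n := by
  induction n with
  | zero => simp
  | succ n ih =>
    rw [pow_succ', iterate_map_mul_of_leibniz hd ha, iterate_succ_apply' d n, ih, map_nsmul,
      map_pow_eq_zero_of_leibniz hd ha, smul_zero, mul_zero, zero_add, mul_smul_comm, ← pow_succ',
      smul_smul, Nat.factorial_succ]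

end Leibniz

theorem ContinuousLinearMap.norm_iterate_apply_le {𝕜 E : Type*} [NontriviallyNormedField 𝕜]
    [SeminormedAddCommGroup E] [NormedSpace 𝕜 E] (f : E →L[𝕜] E) (n : ℕ) (x : E) :
    ‖f^[n] x‖ ≤ ‖f‖ ^ n * ‖x‖ := by
  simpa using (f.lipschitz.iterate n).norm_le_mul (iterate_map_zero f n) x

theorem eventually_le_pow_of_factorial_mul_le_pow {u : ℕ → ℝ} {C : ℝ}
    (h : ∀ n, 0 < n → n ! * u n ≤ C ^ n) (ε : ℝ) (hε : 0 < ε) :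
    ∀ᶠ n in atTop, u n ≤ ε ^ n := by
  filter_upwards [(FloorSemiring.tendsto_pow_div_factorial_atTop (C / ε)).eventually_le_const
    zero_lt_one, eventually_gt_atTop 0] with n hn hn0
  have hfact : (0 : ℝ) < n ! := by positivity
  calc u n ≤ C ^ n / n ! := by rw [le_div_iff₀ hfact, mul_comm]; exact h n hn0
    _ ≤ ε ^ n := by
      rwa [div_le_iff₀ hfact, ← div_le_one (by positivity), ← div_div, ← div_pow]

theorem spectralRadius_eq_zero_of_eventually_norm_pow_le {𝕜 A : Type*} [NormedField 𝕜]
    [NormedRing A] [NormedAlgebra 𝕜 A] [CompleteSpace A] {b : A}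
    (h : ∀ ε : ℝ, 0 < ε → ∀ᶠ n in atTop, ‖b ^ n‖ ≤ ε ^ n) : spectralRadius 𝕜 b = 0 := by
  refine le_antisymm ((spectrum.spectralRadius_le_liminf_pow_nnnorm_pow_one_div 𝕜 b).trans ?_)
    zero_le
  refine ENNReal.le_of_forall_pos_le_add fun ε hε _ => ?_
  rw [zero_add]
  refine liminf_le_of_frequently_le' (Eventually.frequently ?_)
  filter_upwards [h ε hε, eventually_ne_atTop 0] with n hn hn0
  calc (‖b ^ n‖₊ : ℝ≥0∞) ^ (1 / n : ℝ) ≤ ((ε : ℝ≥0∞) ^ n) ^ (1 / n : ℝ) := by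
        gcongr; exact_mod_cast hn
    _ = ε := by rw [one_div, ENNReal.pow_rpow_inv_natCast hn0]

/-- Kleinecke–Shirokov: if `d` is a continuous (linear) derivation on a complex Banach
algebra `B` and `d² a = 0`, then `d a` is quasi-nilpotent. -/
theorem stmt0 {B : Type*} [NormedRing B] [NormedAlgebra ℂ B] [CompleteSpace B]
    (d : B →L[ℂ] B) (hd : ∀ x y : B, d (x * y) = d x * y + x * d y)
    (a : B) (ha : d (d a) = 0) :
    spectralRadius ℂ (d a) = 0 := by
  refine spectralRadius_eq_zero_of_eventually_norm_pow_le
    (eventually_le_pow_of_factorial_mul_le_pow (C := ‖d‖ * ‖a‖) fun n hn => ?_)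
  calc (n ! : ℝ) * ‖d a ^ n‖ = ‖d^[n] (a ^ n)‖ := by
        rw [iterate_map_pow_of_leibniz hd ha, ← Nat.cast_smul_eq_nsmul ℂ, norm_smul,
          Complex.norm_natCast]
    _ ≤ ‖d‖ ^ n * ‖a ^ n‖ := d.norm_iterate_apply_le n _
    _ ≤ (‖d‖ * ‖a‖) ^ n := by
        rw [mul_pow]; gcongr; exact norm_pow_le' a hn
end

section
/- In a complex Banach algebra B, if a, b ∈ B satisfy [[a,b],b] = 0, then the commutator [a,b] = ab - ba is quasi-nilpotent. -/
open Filter Function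
open scoped ENNReal NNReal Topology

section alg
variable {B : Type*} [Ring B] (b : B)

private def dd (b : B) (x : B) : B := x * b - b * x

private lemma dd_add (x y : B) : dd b (x + y) = dd b x + dd b y := by
  simp only [dd]; noncomm_ring

private lemma dd_iter_add (n : ℕ) (x y : B) :
    (dd b)^[n] (x + y) = (dd b)^[n] x + (dd b)^[n] y := by
  induction n generalizing x y with
  | zero => simp
  | succ n ih => simp [Function.iterate_succ_apply, dd_add, ih]

variable {c : B} (hc : dd b c = 0)
include hc

private lemma dd_cmul (x : B) : dd b (c * x) = c * dd b x := by
  have hbc : c * b = b * c := sub_eq_zero.mp hc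
  simp only [dd, mul_sub, mul_assoc]
  rw [← mul_assoc b c x, ← hbc, mul_assoc]

private lemma dd_iter_cmul (n : ℕ) (x : B) :
    (dd b)^[n] (c * x) = c * (dd b)^[n] x := by
  induction n generalizing x with
  | zero => simp
  | succ n ih => simp [Function.iterate_succ_apply, dd_cmul b hc, ih]

variable {a : B} (ha : dd b a = c)
include ha

private lemma dd_amul (x : B) : dd b (a * x) = a * dd b x + c * x := by
  rw [← ha]; simp only [dd]; noncomm_ring

private lemma dd_iter_amul (n : ℕ) (x : B) :
    (dd b)^[n+1] (a * x) = a * (dd b)^[n+1] x + (n+1) • (c * (dd b)^[n] x) := by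
  induction n generalizing x with
  | zero => simpa using dd_amul b hc ha x
  | succ n ih =>
    rw [Function.iterate_succ_apply (dd b) (n+1) (a*x), dd_amul b hc ha, dd_iter_add,
      ih (dd b x), dd_iter_cmul b hc,
      ← Function.iterate_succ_apply (dd b) (n+1) x,
      ← Function.iterate_succ_apply (dd b) n x,
      succ_nsmul (c * (dd b)^[n+1] x) (n+1)]
    abel

private lemma dd_key (n : ℕ) :
    (dd b)^[n] (a^n) = n.factorial • c^n ∧ (dd b)^[n+1] (a^n) = 0 := by
  induction n with
  | zero =>
    refine ⟨by simp, ?_⟩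
    simp [dd]
  | succ n ih =>
    obtain ⟨h1, h2⟩ := ih
    have e1 : (dd b)^[n+1] (a^(n+1)) = (n+1).factorial • c^(n+1) := by
      rw [pow_succ', dd_iter_amul b hc ha, h2, mul_zero, zero_add, h1,
        Nat.factorial_succ, mul_smul]
      congr 1
      rw [mul_smul_comm, ← pow_succ']
    refine ⟨e1, ?_⟩
    rw [pow_succ', dd_iter_amul b hc ha (n + 1),
      Function.iterate_succ_apply' (dd b) (n+1), h2]
    simp [dd]

end alg

section normed
variable {B : Type*} [NormedRing B]

private lemma dd_norm (b x : B) : ‖dd b x‖ ≤ 2 * ‖b‖ * ‖x‖ := by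
  calc ‖x * b - b * x‖ ≤ ‖x * b‖ + ‖b * x‖ := norm_sub_le _ _
    _ ≤ ‖x‖ * ‖b‖ + ‖b‖ * ‖x‖ := add_le_add (norm_mul_le _ _) (norm_mul_le _ _)
    _ = 2 * ‖b‖ * ‖x‖ := by ring

private lemma dd_iter_norm (b x : B) (n : ℕ) :
    ‖(dd b)^[n] x‖ ≤ (2 * ‖b‖)^n * ‖x‖ := by
  induction n generalizing x with
  | zero => simp
  | succ n ih =>
    calc ‖(dd b)^[n] (dd b x)‖ ≤ (2*‖b‖)^n * ‖dd b x‖ := ih _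
      _ ≤ (2*‖b‖)^n * (2*‖b‖*‖x‖) := by
          refine mul_le_mul_of_nonneg_left (dd_norm b x) (by positivity)
      _ = (2*‖b‖)^(n+1) * ‖x‖ := by ring

end normed

/-- Kleinecke–Shirokov theorem: in a complex Banach algebra, if `[[a,b],b] = 0`
then the commutator `[a,b] = a*b - b*a` is quasi-nilpotent. -/
theorem stmt1 {B : Type*} [NormedRing B] [NormedAlgebra ℂ B] [CompleteSpace B]
    (a b : B) (h : (a * b - b * a) * b - b * (a * b - b * a) = 0) :
    spectralRadius ℂ (a * b - b * a) = 0 := by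
  set c := a * b - b * a with hcdef
  have hc : dd b c = 0 := h
  have ha : dd b a = c := rfl
  set M : ℝ := 2 * ‖b‖ * ‖a‖ with hM
  have hM0 : 0 ≤ M := by positivity
  -- norm bound : n! * ‖c^n‖ ≤ M^n for n ≥ 1
  have key : ∀ n : ℕ, 0 < n → (n.factorial : ℝ) * ‖c^n‖ ≤ M^n := by
    intro n hn
    have h1 := (dd_key b hc ha n).1
    have h2 : ‖(dd b)^[n] (a^n)‖ ≤ (2*‖b‖)^n * ‖a^n‖ := dd_iter_norm b _ n
    rw [h1] at h2
    have h3 : ‖(n.factorial) • c^n‖ = (n.factorial : ℝ) * ‖c^n‖ := by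
      rw [← Nat.cast_smul_eq_nsmul ℝ, norm_smul, Real.norm_natCast]
    rw [h3] at h2
    calc (n.factorial : ℝ) * ‖c^n‖ ≤ (2*‖b‖)^n * ‖a^n‖ := h2
      _ ≤ (2*‖b‖)^n * ‖a‖^n :=
          mul_le_mul_of_nonneg_left (norm_pow_le' a hn) (by positivity)
      _ = M^n := by rw [hM, ← mul_pow]
  have gel := spectrum.pow_nnnorm_pow_one_div_tendsto_nhds_spectralRadius c
  have hzero : Tendsto (fun n : ℕ => (‖c ^ n‖₊ : ℝ≥0∞) ^ (1 / n : ℝ)) atTop (𝓝 0) := by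
    rw [ENNReal.tendsto_nhds_zero]
    intro ε hε
    obtain ⟨δ, hδ0, hδε⟩ : ∃ δ : ℝ≥0, 0 < δ ∧ (δ : ℝ≥0∞) ≤ ε := by
      rcases eq_or_ne ε ⊤ with rfl | htop
      · exact ⟨1, one_pos, le_top⟩
      · exact ⟨ε.toNNReal, ENNReal.toNNReal_pos hε.ne' htop,
          (ENNReal.coe_toNNReal htop).le⟩
    have hδR : (0:ℝ) < δ := hδ0
    have hlim := FloorSemiring.tendsto_pow_div_factorial_atTop (M / (δ:ℝ))
    have hev : ∀ᶠ n : ℕ in atTop, (M / (δ:ℝ))^n / n.factorial < 1 :=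
      hlim.eventually (gt_mem_nhds one_pos)
    filter_upwards [hev, eventually_ge_atTop 1] with n hn hn1
    have hfac : (0:ℝ) < n.factorial := by exact_mod_cast n.factorial_pos
    have hMn : M^n ≤ (δ:ℝ)^n * n.factorial := by
      have := hn.le
      rw [div_pow, div_div, div_le_one (by positivity)] at this
      linarith [this]
    have hcn : ‖c^n‖ ≤ (δ:ℝ)^n := by
      have hk := key n hn1
      have : (n.factorial : ℝ) * ‖c^n‖ ≤ (δ:ℝ)^n * n.factorial := hk.trans hMn
      rw [mul_comm ((δ:ℝ)^n) _] at this
      exact le_of_mul_le_mul_left this hfac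
    have hcn' : ‖c^n‖₊ ≤ δ^n := by
      rw [← NNReal.coe_le_coe]
      push_cast
      exact hcn
    have step1 : (‖c^n‖₊ : ℝ≥0∞) ^ (1/n : ℝ) ≤ ((δ:ℝ≥0∞)^n) ^ (1/n : ℝ) := by
      refine ENNReal.rpow_le_rpow ?_ (by positivity)
      exact_mod_cast ENNReal.coe_le_coe.mpr hcn'
    refine step1.trans ?_ |>.trans hδε
    rw [← ENNReal.rpow_natCast (δ:ℝ≥0∞) n, ← ENNReal.rpow_mul,
      mul_one_div_cancel (Nat.cast_ne_zero.mpr (Nat.one_le_iff_ne_zero.mp hn1) : (n:ℝ) ≠ 0),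
      ENNReal.rpow_one]
  exact tendsto_nhds_unique gel hzero
end

section
/- Let A be a complex Banach algebra in which every central quasi-nilpotent element is zero. Suppose n ≥ 3 and φ : A → A is a (nonlinear) Lie n-derivation with φ(0) = 0. If X, Y ∈ A satisfy [X,Y] ∈ Z(A), then [φ(X),Y] + [X,φ(Y)] ∈ Z(A). -/
/-- The left-nested iterated commutator `p_n(x₁,…,xₙ) = [...[[x₁,x₂],x₃],…,xₙ]`. -/
def pComm11 {A : Type*} [Ring A] : List A → A
  | [] => 0
  | a :: t => t.foldl (fun x y => x * y - y * x) a

/-!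
Put `W = [φ X, Y] + [X, φ Y]`. Feeding `(X, Y, x₃, …, xₙ)` to the defining identity of `φ`, the
left side is `φ 0 = 0` and every summand vanishes except the two where `φ` hits `X` or `Y`,
because `[X, Y]` is central; so `[…[W, x₃], …, xₙ] = 0`. Now peel off arguments from the right:
if `[[U, z], g] = 0` for all `g`, then `[U, z]` is a central commutator, hence quasi-nilpotent by
the Kleinecke–Shirokov argument (`ad_U^m (z^m) = m! [U, z]^m`), hence zero. After `n - 3` steps,
`[W, g] = 0` for all `g`.
-/

open Filter

attribute [local instance] LieRing.ofAssociativeRing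

section Ring

variable {A : Type*} [Ring A]

theorem mem_center_iff_forall_lie_eq_zero {c : A} :
    c ∈ Set.center A ↔ ∀ g : A, ⁅c, g⁆ = 0 := by
  simp only [Semigroup.mem_center_iff, ← commute_iff_lie_eq]
  exact forall_congr' fun g => eq_comm

theorem lie_pow_succ_of_commute {a b : A} (hb : Commute b ⁅a, b⁆) (k : ℕ) :
    ⁅a, b ^ (k + 1)⁆ = (k + 1) • (b ^ k * ⁅a, b⁆) := by
  induction k with
  | zero => simp
  | succ k ih =>
    calc ⁅a, b ^ (k + 1 + 1)⁆ = ⁅a, b ^ (k + 1)⁆ * b + b ^ (k + 1) * ⁅a, b⁆ := by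
          simp only [Ring.lie_def, pow_succ _ (k + 1)]; noncomm_ring
      _ = (k + 1 + 1) • (b ^ (k + 1) * ⁅a, b⁆) := by
          rw [ih, smul_mul_assoc, mul_assoc, ← hb.eq, ← mul_assoc, ← pow_succ, ← succ_nsmul]

theorem lie_mul_of_commute {a c : A} (x : A) (ha : Commute a c) : ⁅a, x * c⁆ = ⁅a, x⁆ * c := by
  simp only [Ring.lie_def, sub_mul, mul_assoc, ha.eq]

theorem iterate_lie_pow {a b : A} (ha : Commute a ⁅a, b⁆) (hb : Commute b ⁅a, b⁆) (j k : ℕ) :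
    (⁅a, ·⁆)^[j] (b ^ (k + j)) = (k + j).descFactorial j • (b ^ k * ⁅a, b⁆ ^ j) := by
  induction j generalizing k with
  | zero => simp
  | succ j ih =>
    rw [Function.iterate_succ_apply', ← add_assoc, add_right_comm, ih, lie_nsmul,
      lie_mul_of_commute _ (ha.pow_right j), lie_pow_succ_of_commute hb, smul_mul_assoc,
      smul_smul, mul_assoc, ← pow_succ', Nat.descFactorial_succ, mul_comm, Nat.add_sub_cancel]

theorem iterate_lie_pow_self {a b : A} (ha : Commute a ⁅a, b⁆) (hb : Commute b ⁅a, b⁆) (m : ℕ) :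
    (⁅a, ·⁆)^[m] (b ^ m) = m.factorial • ⁅a, b⁆ ^ m := by
  simpa [Nat.descFactorial_self] using iterate_lie_pow ha hb m 0

end Ring

section Normed

variable {A : Type*} [NormedRing A]

theorem norm_lie_le (a x : A) : ‖⁅a, x⁆‖ ≤ 2 * ‖a‖ * ‖x‖ :=
  calc ‖⁅a, x⁆‖ ≤ ‖a * x‖ + ‖x * a‖ := by rw [Ring.lie_def]; exact norm_sub_le _ _
    _ ≤ ‖a‖ * ‖x‖ + ‖x‖ * ‖a‖ := add_le_add (norm_mul_le _ _) (norm_mul_le _ _)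
    _ = 2 * ‖a‖ * ‖x‖ := by ring

theorem norm_iterate_lie_le (a x : A) (m : ℕ) : ‖(⁅a, ·⁆)^[m] x‖ ≤ (2 * ‖a‖) ^ m * ‖x‖ := by
  induction m with
  | zero => simp
  | succ m ih =>
    rw [Function.iterate_succ_apply', pow_succ', mul_assoc]
    exact (norm_lie_le a _).trans (mul_le_mul_of_nonneg_left ih (by positivity))

end Normed

section Spectrum

variable {𝕜 A : Type*} [NontriviallyNormedField 𝕜] [NormedRing A] [NormedAlgebra 𝕜 A]
  [CompleteSpace A]

theorem spectralRadius_eq_zero_of_factorial_mul_norm_pow_le {c : A} {M : ℝ}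
    (h : ∀ᶠ m in atTop, (m.factorial : ℝ) * ‖c ^ m‖ ≤ M ^ m) : spectralRadius 𝕜 c = 0 := by
  refine le_antisymm (iSup₂_le fun k hσ => ?_) zero_le
  suffices k = 0 by simp [this]
  by_contra hk0
  have hk : 0 < ‖k‖ := norm_pos_iff.mpr hk0
  -- `m! ‖k‖ ^ m ≤ m! ‖c ^ m‖ ‖1‖ ≤ M ^ m ‖1‖` as `k ^ m ∈ σ (c ^ m)`, but `M ^ m / m! → 0`
  have hsmall : ∀ᶠ m in atTop, (M / ‖k‖) ^ m / m.factorial * ‖(1 : A)‖ < 1 := by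
    have := (FloorSemiring.tendsto_pow_div_factorial_atTop (M / ‖k‖)).mul_const ‖(1 : A)‖
    exact this.eventually (gt_mem_nhds (by simp))
  obtain ⟨m, hm, hm'⟩ := (h.and hsmall).exists
  have hspec : ‖k‖ ^ m ≤ ‖c ^ m‖ * ‖(1 : A)‖ := by
    simpa using spectrum.norm_le_norm_mul_of_mem (spectrum.pow_mem_pow c m hσ)
  rw [div_pow, div_div, div_mul_eq_mul_div, div_lt_one (by positivity)] at hm'
  have h₁ := mul_le_mul_of_nonneg_left hspec (Nat.cast_nonneg (α := ℝ) m.factorial)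
  have h₂ := mul_le_mul_of_nonneg_right hm (norm_nonneg (1 : A))
  linarith

end Spectrum

section KleineckeShirokov

theorem factorial_mul_norm_lie_pow_le (𝕜 : Type*) {A : Type*} [RCLike 𝕜] [NormedRing A]
    [NormedAlgebra 𝕜 A] {a b : A} (ha : Commute a ⁅a, b⁆) (hb : Commute b ⁅a, b⁆) (m : ℕ) :
    (m.factorial : ℝ) * ‖⁅a, b⁆ ^ m‖ ≤ (2 * ‖a‖) ^ m * ‖b ^ m‖ := by
  rw [← nsmul_eq_mul, ← RCLike.norm_nsmul 𝕜, ← iterate_lie_pow_self ha hb]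
  exact norm_iterate_lie_le a _ m

theorem spectralRadius_lie_eq_zero_of_commute {𝕜 A : Type*} [RCLike 𝕜] [NormedRing A]
    [NormedAlgebra 𝕜 A] [CompleteSpace A] {a b : A} (ha : Commute a ⁅a, b⁆)
    (hb : Commute b ⁅a, b⁆) : spectralRadius 𝕜 ⁅a, b⁆ = 0 := by
  refine spectralRadius_eq_zero_of_factorial_mul_norm_pow_le (M := 2 * ‖a‖ * ‖b‖) ?_
  filter_upwards [eventually_gt_atTop 0] with m hm
  calc (m.factorial : ℝ) * ‖⁅a, b⁆ ^ m‖ ≤ (2 * ‖a‖) ^ m * ‖b ^ m‖ :=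
        factorial_mul_norm_lie_pow_le 𝕜 ha hb m
    _ ≤ (2 * ‖a‖) ^ m * ‖b‖ ^ m := by gcongr; exact norm_pow_le' b hm
    _ = (2 * ‖a‖ * ‖b‖) ^ m := (mul_pow _ _ _).symm

end KleineckeShirokov

section LieFold

variable {L : Type*} [LieRing L]

theorem List.foldl_lie_add (t : List L) (a b : L) :
    t.foldl (⁅·, ·⁆) (a + b) = t.foldl (⁅·, ·⁆) a + t.foldl (⁅·, ·⁆) b := by
  induction t generalizing a b with
  | nil => rfl
  | cons y t ih => simp only [List.foldl_cons, add_lie, ih]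

theorem List.foldl_lie_zero (t : List L) : t.foldl (⁅·, ·⁆) 0 = 0 := by
  induction t with
  | nil => rfl
  | cons y t ih => simpa only [List.foldl_cons, zero_lie] using ih

theorem List.foldl_lie_eq_zero_of_forall_lie_eq_zero {c : L} (hc : ∀ y : L, ⁅c, y⁆ = 0)
    {t : List L} (ht : t ≠ []) : t.foldl (⁅·, ·⁆) c = 0 := by
  obtain ⟨y, t, rfl⟩ := List.exists_cons_of_ne_nil ht
  rw [List.foldl_cons, hc, List.foldl_lie_zero]

end LieFold

section LieNDerivation

variable {A : Type*} [Ring A]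

theorem pComm11_cons (a : A) (t : List A) : pComm11 (a :: t) = t.foldl (⁅·, ·⁆) a := by
  simp only [pComm11, Ring.lie_def]

def IsLieNDerivation (n : ℕ) (φ : A → A) : Prop :=
  ∀ x : Fin n → A,
    φ (pComm11 (List.ofFn x)) = ∑ i, pComm11 (List.ofFn (Function.update x i (φ (x i))))

theorem IsLieNDerivation.foldl_lie_eq_zero {φ : A → A} {l : List A}
    (hφ : IsLieNDerivation (l.length + 2) φ) (hφ0 : φ 0 = 0) (hl : l ≠ []) {X Y : A}
    (hXY : ∀ g : A, ⁅⁅X, Y⁆, g⁆ = 0) : l.foldl (⁅·, ·⁆) (⁅φ X, Y⁆ + ⁅X, φ Y⁆) = 0 := by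
  have hl' : ∀ y : Fin l.length → A, List.ofFn y ≠ [] := by
    simpa [List.ofFn_eq_nil_iff] using hl
  have h := hφ (Fin.cons X (Fin.cons Y l.get))
  simp only [List.ofFn_cons, List.ofFn_get, pComm11_cons, List.foldl_cons,
    List.foldl_lie_eq_zero_of_forall_lie_eq_zero hXY hl, hφ0, Fin.sum_univ_succ,
    Fin.update_cons_zero, ← Fin.cons_update, Fin.cons_zero, Fin.cons_succ,
    List.foldl_lie_eq_zero_of_forall_lie_eq_zero hXY (hl' _), Finset.sum_const_zero, add_zero] at h
  rw [List.foldl_lie_add, h]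

end LieNDerivation

section Descent

variable {A : Type*} [NormedRing A] [NormedAlgebra ℂ A] [CompleteSpace A]

theorem lie_eq_zero_of_lie_mem_center
    (hcq : ∀ z : A, z ∈ Set.center A → spectralRadius ℂ z = 0 → z = 0) {a b : A}
    (h : ⁅a, b⁆ ∈ Set.center A) : ⁅a, b⁆ = 0 :=
  hcq _ h <| spectralRadius_lie_eq_zero_of_commute
    (Set.mem_center_iff.mp h |>.comm a).symm (Set.mem_center_iff.mp h |>.comm b).symm

theorem mem_center_of_forall_foldl_lie_eq_zero
    (hcq : ∀ z : A, z ∈ Set.center A → spectralRadius ℂ z = 0 → z = 0) {W : A} (k : ℕ)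
    (h : ∀ l : List A, l.length = k + 1 → l.foldl (⁅·, ·⁆) W = 0) : W ∈ Set.center A := by
  induction k with
  | zero => exact mem_center_iff_forall_lie_eq_zero.mpr fun g => h [g] rfl
  | succ k ih =>
    refine ih fun l hl => ?_
    obtain ⟨l, z, rfl⟩ := (List.eq_nil_or_concat' l).resolve_left (by rintro rfl; simp at hl)
    rw [List.foldl_concat]
    refine lie_eq_zero_of_lie_mem_center hcq (mem_center_iff_forall_lie_eq_zero.mpr fun g => ?_)
    simpa using h (l ++ [z, g]) (by simpa using hl)

end Descent

/-- In a complex Banach algebra in which every central quasi-nilpotent element is zero,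
a nonlinear Lie `n`-derivation `φ` (`n ≥ 3`, `φ 0 = 0`) satisfies: if `[X,Y]` is central,
then `[φ X, Y] + [X, φ Y]` is central. -/
theorem stmt11 {A : Type*} [NormedRing A] [NormedAlgebra ℂ A] [CompleteSpace A]
    (hcq : ∀ z : A, z ∈ Set.center A → spectralRadius ℂ z = 0 → z = 0)
    (n : ℕ) (hn : 3 ≤ n) (φ : A → A) (hφ0 : φ 0 = 0)
    (hφ : ∀ x : Fin n → A,
      φ (pComm11 (List.ofFn x))
        = ∑ i, pComm11 (List.ofFn (Function.update x i (φ (x i)))))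
    (X Y : A) (hXY : X * Y - Y * X ∈ Set.center A) :
    (φ X * Y - Y * φ X) + (X * φ Y - φ Y * X) ∈ Set.center A := by
  simp only [← Ring.lie_def] at hXY ⊢
  refine mem_center_of_forall_foldl_lie_eq_zero hcq (n - 3) fun l hl => ?_
  obtain rfl : n = l.length + 2 := by omega
  exact IsLieNDerivation.foldl_lie_eq_zero hφ hφ0 (by rintro rfl; simp at hl)
    (mem_center_iff_forall_lie_eq_zero.mp hXY)
end
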